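/- Closeness of the two barriers: let j > 0, let u ∈ L^∞(ℝ₊,ℝ₊) ∩ L¹(ℝ₊,ℝ₊), and let δ > 0 with jδ < F(0; u). Then for all k ∈ ℕ, |S^{(δ,+)}_{kδ}(u) − S^{(δ,−)}_{kδ}(u)|₁ ≤ 4jδ. -/

import Mathlib

/-!
Both `K^{(δ)}` (on atom-free inputs of mass `> jδ`) and the Neumann heat flow are contractions
for `dist1`; the heat flow because it is a positive, mass-preserving integral operator, and `K`
because after cutting at `R_δ(u) ≤ R_δ(v)` the only extra discrepancy is the mass of `v` on
`(R_δ(u), R_δ(v)]`, which equals `∫_{R_δ(u)}^∞ (v - u)`. Hence `dist1 (S⁻_k) (K S⁺_k)` never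
exceeds its initial value `dist1 u (K u) = 2jδ`, and one more step of each barrier, compared
through `H S⁻_k`, costs at most another `dist1 v (K v) = 2jδ`.
-/

open MeasureTheory Set Filter

noncomputable section

/-- An element of the space `𝓤`: an atom `u.1 ≥ 0` at the origin together with a
density `u.2` on `ℝ₊`, representing the measure `u.1 δ₀ + u.2 dr`. -/
abbrev UEl := ℝ × (ℝ → ℝ)

/-- Membership in `𝓤`: nonnegative atom, nonnegative density which is in
`L¹(ℝ₊) ∩ L^∞(ℝ₊)`. -/
def memU (u : UEl) : Prop :=
  0 ≤ u.1 ∧ (∀ r, 0 ≤ u.2 r) ∧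
    Integrable u.2 (volume.restrict (Set.Ioi (0:ℝ))) ∧
    ∃ M : ℝ, ∀ r, u.2 r ≤ M

/-- The tail function `F(r; u) = c_u 𝟙_{{0}}(r) + ∫_r^∞ ρ_u`. -/
def tailF (u : UEl) (r : ℝ) : ℝ :=
  (if r = 0 then u.1 else 0) + ∫ x in Set.Ioi r, u.2 x

/-- Total variation distance `|u − v|₁ = |c_u − c_v| + ∫₀^∞ |ρ_u − ρ_v|`. -/
def dist1 (u v : UEl) : ℝ :=
  |u.1 - v.1| + ∫ r in Set.Ioi (0:ℝ), |u.2 r - v.2 r|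

/-- Membership in `𝓤_δ`: in `𝓤` and the density has mass `> jδ`. -/
def memUdelta (j δ : ℝ) (u : UEl) : Prop :=
  memU u ∧ j * δ < ∫ r in Set.Ioi (0:ℝ), u.2 r

/-- `R_δ(u) = inf {r ≥ 0 : F(r; u) = jδ}`. -/
def Rdelta (j δ : ℝ) (u : UEl) : ℝ :=
  sInf {r : ℝ | 0 ≤ r ∧ tailF u r = j * δ}

/-- The cut-and-paste operator `K^{(δ)} u = (jδ, ρ_u 𝟙_{[0, R_δ(u)]})`. -/
def cutPaste (j δ : ℝ) (u : UEl) : UEl :=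
  (j * δ, Set.indicator (Set.Icc 0 (Rdelta j δ u)) u.2)

/-- The Neumann heat kernel on `ℝ₊`. -/
def Gneum (t r r' : ℝ) : ℝ :=
  (Real.sqrt (2 * Real.pi * t))⁻¹ *
    (Real.exp (-(r - r')^2 / (2*t)) + Real.exp (-(r + r')^2 / (2*t)))

/-- The Neumann heat semigroup acting on `𝓤`: the result has zero atom and density
`r ↦ c_u G_t(r,0) + ∫₀^∞ G_t(r,r') ρ_u(r') dr'`. -/
def heat (t : ℝ) (u : UEl) : UEl :=
  (0, fun r => u.1 * Gneum t r 0 + ∫ r' in Set.Ioi (0:ℝ), Gneum t r r' * u.2 r')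

/-- Mass-transport partial order: `u ≤ v` iff `F(r;u) ≤ F(r;v)` for all `r ≥ 0`. -/
def Ule (u v : UEl) : Prop := ∀ r : ℝ, 0 ≤ r → tailF u r ≤ tailF v r

/-- Partial order modulo `m`: `F(r;u) ≤ F(r;v) + m` for all `r ≥ 0`. -/
def UleMod (u v : UEl) (m : ℝ) : Prop :=
  ∀ r : ℝ, 0 ≤ r → tailF u r ≤ tailF v r + m

/-- The lower barrier `S^{(δ,−)}_{kδ}(u)`. -/
def Sminus (j δ : ℝ) (u : UEl) : ℕ → UEl
  | 0 => u
  | k+1 => cutPaste j δ (heat δ (Sminus j δ u k))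

/-- The upper barrier `S^{(δ,+)}_{kδ}(u)`. -/
def Splus (j δ : ℝ) (u : UEl) : ℕ → UEl
  | 0 => u
  | k+1 => heat δ (cutPaste j δ (Splus j δ u k))

/-- A nonnegative density in `L¹(ℝ₊) ∩ L^∞(ℝ₊)`. -/
def goodFn (u : ℝ → ℝ) : Prop :=
  (∀ r, 0 ≤ u r) ∧ Integrable u (volume.restrict (Set.Ioi (0:ℝ))) ∧
    ∃ M : ℝ, ∀ r, u r ≤ M

/-- Mass-transport order on densities: `∫_r^∞ u ≤ ∫_r^∞ v` for all `r ≥ 0`. -/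
def fnLe (u v : ℝ → ℝ) : Prop :=
  ∀ r : ℝ, 0 ≤ r → (∫ x in Set.Ioi r, u x) ≤ ∫ x in Set.Ioi r, v x

end

open Topology ProbabilityTheory

section Tail

variable {E : Type*} [NormedAddCommGroup E] [NormedSpace ℝ E]

lemma integral_Ioi_eq_sub_intervalIntegral {f : ℝ → E} (hf : Integrable f) (r : ℝ) :
    ∫ x in Ioi r, f x = (∫ x in Ioi (0:ℝ), f x) - ∫ x in (0:ℝ)..r, f x :=
  eq_sub_of_add_eq' (intervalIntegral.integral_interval_add_Ioi hf.integrableOn hf.integrableOn)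

lemma continuous_integral_Ioi {f : ℝ → E} (hf : Integrable f) :
    Continuous fun r => ∫ x in Ioi r, f x := by
  rw [funext (integral_Ioi_eq_sub_intervalIntegral hf)]
  exact continuous_const.sub
    (intervalIntegral.continuous_primitive (fun _ _ => hf.intervalIntegrable) 0)

lemma tendsto_integral_Ioi_atTop {f : ℝ → E} (hf : Integrable f) :
    Tendsto (fun r => ∫ x in Ioi r, f x) atTop (𝓝 0) := by
  rw [funext (integral_Ioi_eq_sub_intervalIntegral hf)]
  simpa using (tendsto_const_nhds (x := ∫ x in Ioi (0:ℝ), f x)).sub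
    (intervalIntegral_tendsto_integral_Ioi 0 hf.integrableOn tendsto_id)

lemma integral_Ioc_eq_sub {f : ℝ → E} {a b : ℝ} (hf : IntegrableOn f (Ioi a))
    (hab : a ≤ b) :
    ∫ x in Ioc a b, f x = (∫ x in Ioi a, f x) - ∫ x in Ioi b, f x := by
  rw [intervalIntegral.integral_Ioi_sub_Ioi hf hab, intervalIntegral.integral_of_le hab]

end Tail

lemma csInf_mem_levelSet {T : ℝ → ℝ} {L m : ℝ} (hT : Continuous T)
    (hlim : Tendsto T atTop (𝓝 L)) (hLm : L < m) (hm0 : m < T 0) :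
    sInf {r | 0 ≤ r ∧ T r = m} ∈ {r | 0 ≤ r ∧ T r = m} := by
  obtain ⟨N, hN⟩ := (hlim.eventually_lt_const hLm).exists_forall_of_atTop
  have hne : {r | 0 ≤ r ∧ T r = m}.Nonempty := by
    obtain ⟨r, hr, hTr⟩ := intermediate_value_Icc' (le_max_right N 0) hT.continuousOn
      ⟨(hN _ (le_max_left N 0)).le, hm0.le⟩
    exact ⟨r, hr.1, hTr⟩
  have hclosed : IsClosed {r | 0 ≤ r ∧ T r = m} :=
    isClosed_Ici.inter (isClosed_eq hT continuous_const)
  exact hclosed.csInf_mem hne ⟨0, fun _ hr => hr.1⟩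

section Kernel

variable {t : ℝ}

lemma Gneum_eq_gaussianPDFReal (ht : 0 ≤ t) (r r' : ℝ) :
    Gneum t r r' = gaussianPDFReal r' t.toNNReal r + gaussianPDFReal (-r') t.toNNReal r := by
  simp only [Gneum, gaussianPDFReal, Real.coe_toNNReal _ ht, sub_neg_eq_add, mul_add]

lemma Gneum_nonneg (t r r' : ℝ) : 0 ≤ Gneum t r r' := by
  unfold Gneum
  positivity

lemma Gneum_le (ht : 0 ≤ t) (r r' : ℝ) :
    Gneum t r r' ≤ 2 * (Real.sqrt (2 * Real.pi * t))⁻¹ := by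
  have hexp : ∀ x : ℝ, Real.exp (-x ^ 2 / (2 * t)) ≤ 1 := fun x =>
    Real.exp_le_one_iff.2 (div_nonpos_of_nonpos_of_nonneg (neg_nonpos.2 (sq_nonneg x))
      (by positivity))
  unfold Gneum
  have hsum := add_le_add (hexp (r - r')) (hexp (r + r'))
  exact mul_le_mul_of_nonneg_left (hsum.trans_eq one_add_one_eq_two)
    (inv_nonneg.2 (Real.sqrt_nonneg _)) |>.trans_eq (mul_comm _ _)

lemma continuous_Gneum (t : ℝ) : Continuous fun p : ℝ × ℝ => Gneum t p.1 p.2 := by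
  unfold Gneum
  fun_prop

lemma integrable_Gneum (ht : 0 ≤ t) (r' : ℝ) : Integrable fun r => Gneum t r r' := by
  simp_rw [Gneum_eq_gaussianPDFReal ht]
  exact (integrable_gaussianPDFReal _ _).add (integrable_gaussianPDFReal _ _)

/-- The reflected Gaussian `r ↦ g_{-r'}(r)` puts on `(0, ∞)` the mass that `g_{r'}` puts on
`(-∞, 0]`, so the Neumann kernel keeps all of the mass on the half-line. -/
lemma integral_Gneum (ht : 0 < t) (r' : ℝ) : ∫ r in Ioi (0:ℝ), Gneum t r r' = 1 := by
  have hv : t.toNNReal ≠ 0 := by simpa using ht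
  set g := gaussianPDFReal r' t.toNNReal
  have hreflect : ∀ r, gaussianPDFReal (-r') t.toNNReal r = g (-r) := fun r => by
    simp only [g, gaussianPDFReal]
    ring_nf
  simp_rw [Gneum_eq_gaussianPDFReal ht.le, hreflect]
  rw [integral_add (integrable_gaussianPDFReal _ _).integrableOn
      ((integrable_gaussianPDFReal _ _).comp_neg).integrableOn,
    integral_comp_neg_Ioi, neg_zero, add_comm,
    intervalIntegral.integral_Iic_add_Ioi (integrable_gaussianPDFReal _ _).integrableOn
      (integrable_gaussianPDFReal _ _).integrableOn,
    integral_gaussianPDFReal_eq_one _ hv]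

end Kernel

noncomputable def mass (u : UEl) : ℝ := u.1 + ∫ r in Ioi (0:ℝ), u.2 r

/-- `memU` without the `L^∞` bound. -/
structure IsFinMeas (u : UEl) : Prop where
  fst_nonneg : 0 ≤ u.1
  snd_nonneg : ∀ r, 0 ≤ u.2 r
  integrableOn : IntegrableOn u.2 (Ioi 0)

lemma dist1_comm (u v : UEl) : dist1 u v = dist1 v u := by
  simp only [dist1, abs_sub_comm]

lemma dist1_triangle {u v w : UEl} (hu : IntegrableOn u.2 (Ioi 0))
    (hv : IntegrableOn v.2 (Ioi 0)) (hw : IntegrableOn w.2 (Ioi 0)) :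
    dist1 u w ≤ dist1 u v + dist1 v w := by
  have hint : ∫ r in Ioi (0:ℝ), |u.2 r - w.2 r|
      ≤ ∫ r in Ioi (0:ℝ), (|u.2 r - v.2 r| + |v.2 r - w.2 r|) :=
    integral_mono (hu.sub hw).abs ((hu.sub hv).abs.add (hv.sub hw).abs)
      fun r => abs_sub_le _ _ _
  have hadd : ∫ r in Ioi (0:ℝ), (|u.2 r - v.2 r| + |v.2 r - w.2 r|)
      = (∫ r in Ioi (0:ℝ), |u.2 r - v.2 r|) + ∫ r in Ioi (0:ℝ), |v.2 r - w.2 r| :=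
    integral_add (hu.sub hv).abs (hv.sub hw).abs
  unfold dist1
  linarith [abs_sub_le u.1 v.1 w.1]

section Heat

variable {t : ℝ}

lemma integrableOn_Gneum_mul (ht : 0 ≤ t) {ρ : ℝ → ℝ} (hρ : IntegrableOn ρ (Ioi 0))
    (r : ℝ) :
    IntegrableOn (fun r' => Gneum t r r' * ρ r') (Ioi 0) :=
  hρ.bdd_mul (c := 2 * (Real.sqrt (2 * Real.pi * t))⁻¹)
    ((continuous_Gneum t).comp (Continuous.prodMk_right r)).aestronglyMeasurable
    (Eventually.of_forall fun r' => by
      rw [Real.norm_eq_abs, abs_of_nonneg (Gneum_nonneg t r r')]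
      exact Gneum_le ht r r')

lemma integrable_Gneum_mul_prod (ht : 0 < t) {ρ : ℝ → ℝ} (hρ : IntegrableOn ρ (Ioi 0)) :
    Integrable (fun p : ℝ × ℝ => Gneum t p.1 p.2 * ρ p.2)
      ((volume.restrict (Ioi 0)).prod (volume.restrict (Ioi 0))) := by
  have hmeas : AEStronglyMeasurable (fun p : ℝ × ℝ => Gneum t p.1 p.2 * ρ p.2)
      ((volume.restrict (Ioi 0)).prod (volume.restrict (Ioi 0))) :=
    (continuous_Gneum t).aestronglyMeasurable.mul hρ.aestronglyMeasurable.comp_snd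
  refine (integrable_prod_iff' hmeas).2
    ⟨Eventually.of_forall fun r' =>
      ((integrable_Gneum ht.le r').mul_const (ρ r')).integrableOn, ?_⟩
  refine hρ.norm.congr (Eventually.of_forall fun r' => ?_)
  simp only [norm_mul, Real.norm_eq_abs, abs_of_nonneg (Gneum_nonneg t _ r')]
  rw [integral_mul_const, integral_Gneum ht, one_mul]

lemma integrableOn_heat_snd (ht : 0 < t) {u : UEl} (hu : IntegrableOn u.2 (Ioi 0)) :
    IntegrableOn (heat t u).2 (Ioi 0) :=
  ((integrable_Gneum ht.le 0).integrableOn.const_mul u.1).add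
    (integrable_Gneum_mul_prod ht hu).integral_prod_left

lemma integral_heat_snd (ht : 0 < t) {u : UEl} (hu : IntegrableOn u.2 (Ioi 0)) :
    ∫ r in Ioi (0:ℝ), (heat t u).2 r = mass u := by
  rw [heat, integral_add ((integrable_Gneum ht.le 0).integrableOn.const_mul u.1)
      (integrable_Gneum_mul_prod ht hu).integral_prod_left,
    integral_const_mul, integral_Gneum ht, mul_one,
    integral_integral_swap (integrable_Gneum_mul_prod ht hu)]
  simp only [integral_mul_const, integral_Gneum ht, one_mul, mass]

lemma heat_snd_nonneg {u : UEl} (hc : 0 ≤ u.1) (hρ : ∀ r, 0 ≤ u.2 r) (r : ℝ) :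
    0 ≤ (heat t u).2 r :=
  add_nonneg (mul_nonneg hc (Gneum_nonneg t r 0))
    (integral_nonneg fun r' => mul_nonneg (Gneum_nonneg t r r') (hρ r'))

lemma isFinMeas_heat (ht : 0 < t) {u : UEl} (hu : IsFinMeas u) : IsFinMeas (heat t u) :=
  ⟨le_rfl, heat_snd_nonneg hu.fst_nonneg hu.snd_nonneg,
    integrableOn_heat_snd ht hu.integrableOn⟩

lemma mass_heat (ht : 0 < t) {u : UEl} (hu : IntegrableOn u.2 (Ioi 0)) :
    mass (heat t u) = mass u := by
  rw [mass, integral_heat_snd ht hu, heat, zero_add]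

lemma dist1_heat_le (ht : 0 < t) {u v : UEl} (hu : IntegrableOn u.2 (Ioi 0))
    (hv : IntegrableOn v.2 (Ioi 0)) : dist1 (heat t u) (heat t v) ≤ dist1 u v := by
  set w : UEl := (|u.1 - v.1|, fun r => |u.2 r - v.2 r|)
  have hw : IntegrableOn w.2 (Ioi 0) := (hu.sub hv).abs
  have hpt : ∀ r, |(heat t u).2 r - (heat t v).2 r| ≤ (heat t w).2 r := fun r => by
    have hdiff : (heat t u).2 r - (heat t v).2 r = (u.1 - v.1) * Gneum t r 0
        + ∫ r' in Ioi (0:ℝ), Gneum t r r' * (u.2 r' - v.2 r') := by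
      simp only [heat, mul_sub, integral_sub (integrableOn_Gneum_mul ht.le hu r)
        (integrableOn_Gneum_mul ht.le hv r)]
      ring
    rw [hdiff]
    refine (abs_add_le _ _).trans (add_le_add ?_ ?_)
    · rw [abs_mul, abs_of_nonneg (Gneum_nonneg t r 0)]
    · refine (abs_integral_le_integral_abs).trans_eq (integral_congr_ae ?_)
      simp only [abs_mul, abs_of_nonneg (Gneum_nonneg t r _)]
      rfl
  calc dist1 (heat t u) (heat t v)
      = ∫ r in Ioi (0:ℝ), |(heat t u).2 r - (heat t v).2 r| := by simp [dist1, heat]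
    _ ≤ ∫ r in Ioi (0:ℝ), (heat t w).2 r :=
        integral_mono ((integrableOn_heat_snd ht hu).sub (integrableOn_heat_snd ht hv)).abs
          (integrableOn_heat_snd ht hw) hpt
    _ = dist1 u v := integral_heat_snd ht hw

end Heat

section Cut

variable {j δ : ℝ}

lemma Ioi_inter_Icc_of_le {α : Type*} [LinearOrder α] {a b c : α} (h : a ≤ b) :
    Ioi b ∩ Icc a c = Ioc b c := by
  ext x
  simp only [mem_inter_iff, mem_Ioi, mem_Icc, mem_Ioc]
  exact ⟨fun hx => ⟨hx.1, hx.2.2⟩, fun hx => ⟨hx.1, h.trans hx.1.le, hx.2⟩⟩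

lemma cutPaste_snd (j δ : ℝ) (u : UEl) :
    (cutPaste j δ u).2 = (Icc 0 (Rdelta j δ u)).indicator u.2 := rfl

lemma cutPaste_fst (j δ : ℝ) (u : UEl) : (cutPaste j δ u).1 = j * δ := rfl

lemma tailF_of_fst_eq_zero {u : UEl} (hc : u.1 = 0) (r : ℝ) :
    tailF u r = ∫ x in Ioi r, u.2 x := by
  simp [tailF, hc]

lemma Rdelta_spec (hjδ : 0 < j * δ) {u : UEl} (hc : u.1 = 0)
    (hu : IntegrableOn u.2 (Ioi 0)) (hm : j * δ < ∫ x in Ioi (0:ℝ), u.2 x) :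
    0 ≤ Rdelta j δ u ∧ ∫ x in Ioi (Rdelta j δ u), u.2 x = j * δ := by
  -- extending `u.2` by zero to `(-∞, 0]` makes the tail continuous on all of `ℝ`
  set f := (Ioi (0:ℝ)).indicator u.2
  have hf : Integrable f := hu.integrable_indicator measurableSet_Ioi
  have htail : ∀ r, 0 ≤ r → tailF u r = ∫ x in Ioi r, f x := fun r hr => by
    rw [tailF_of_fst_eq_zero hc, setIntegral_indicator measurableSet_Ioi, Ioi_inter_Ioi,
      sup_eq_left.2 hr]
  have hset :
      {r | 0 ≤ r ∧ tailF u r = j * δ} = {r | 0 ≤ r ∧ ∫ x in Ioi r, f x = j * δ} := by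
    ext r
    exact and_congr_right fun hr => by rw [htail r hr]
  have hmem := csInf_mem_levelSet (continuous_integral_Ioi hf) (tendsto_integral_Ioi_atTop hf)
    hjδ (by rwa [← htail 0 le_rfl, tailF_of_fst_eq_zero hc])
  rw [← hset] at hmem
  obtain ⟨hR, hRtail⟩ := hmem
  exact ⟨hR, by rwa [tailF_of_fst_eq_zero hc] at hRtail⟩

lemma isFinMeas_cutPaste (hjδ : 0 ≤ j * δ) {u : UEl} (hu : IsFinMeas u) :
    IsFinMeas (cutPaste j δ u) :=
  ⟨hjδ, indicator_nonneg fun r _ => hu.snd_nonneg r,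
    hu.integrableOn.indicator measurableSet_Icc⟩

/-- The hypotheses under which `K^{(δ)}` removes exactly the mass `jδ` beyond `R_δ(u)` and
places it as an atom at the origin. -/
structure IsCuttable (j δ : ℝ) (u : UEl) : Prop extends IsFinMeas u where
  fst_eq_zero : u.1 = 0
  lt_integral : j * δ < ∫ x in Ioi (0:ℝ), u.2 x

lemma IsCuttable.lt_mass {u : UEl} (hu : IsCuttable j δ u) : j * δ < mass u := by
  rw [mass, hu.fst_eq_zero, zero_add]
  exact hu.lt_integral

lemma integral_cutPaste_snd (hjδ : 0 < j * δ) {u : UEl} (hc : u.1 = 0)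
    (hu : IntegrableOn u.2 (Ioi 0)) (hm : j * δ < ∫ x in Ioi (0:ℝ), u.2 x) :
    ∫ x in Ioi (0:ℝ), (cutPaste j δ u).2 x = (∫ x in Ioi (0:ℝ), u.2 x) - j * δ := by
  obtain ⟨hR, hRtail⟩ := Rdelta_spec hjδ hc hu hm
  rw [cutPaste_snd, setIntegral_indicator measurableSet_Icc, Ioi_inter_Icc_of_le le_rfl,
    integral_Ioc_eq_sub hu hR, hRtail]

lemma mass_cutPaste (hjδ : 0 < j * δ) {u : UEl} (hc : u.1 = 0)
    (hu : IntegrableOn u.2 (Ioi 0)) (hm : j * δ < ∫ x in Ioi (0:ℝ), u.2 x) :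
    mass (cutPaste j δ u) = mass u := by
  rw [mass, integral_cutPaste_snd hjδ hc hu hm, mass, hc, cutPaste]
  ring

lemma dist1_cutPaste_self (hjδ : 0 < j * δ) {u : UEl} (hu : IsCuttable j δ u) :
    dist1 u (cutPaste j δ u) = 2 * (j * δ) := by
  have hle : ∀ r, (cutPaste j δ u).2 r ≤ u.2 r :=
    indicator_le_self' fun r _ => hu.snd_nonneg r
  have hcut : IntegrableOn (cutPaste j δ u).2 (Ioi 0) :=
    hu.integrableOn.indicator measurableSet_Icc
  have habs : ∫ r in Ioi (0:ℝ), |u.2 r - (cutPaste j δ u).2 r|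
      = ∫ r in Ioi (0:ℝ), (u.2 r - (cutPaste j δ u).2 r) :=
    integral_congr_ae (Eventually.of_forall fun r => abs_of_nonneg (sub_nonneg.2 (hle r)))
  rw [dist1, habs, integral_sub hu.integrableOn hcut,
    integral_cutPaste_snd hjδ hu.fst_eq_zero hu.integrableOn hu.lt_integral, hu.fst_eq_zero,
    cutPaste, zero_sub, abs_neg, abs_of_pos hjδ]
  ring

lemma integral_abs_cutPaste_sub_le_of_Rdelta_le (hjδ : 0 < j * δ) {u v : UEl}
    (hu : IsCuttable j δ u) (hv : IsCuttable j δ v) (hR : Rdelta j δ u ≤ Rdelta j δ v) :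
    ∫ r in Ioi (0:ℝ), |(cutPaste j δ u).2 r - (cutPaste j δ v).2 r|
      ≤ ∫ r in Ioi (0:ℝ), |u.2 r - v.2 r| := by
  obtain ⟨hRu, hu_tail⟩ := Rdelta_spec hjδ hu.fst_eq_zero hu.integrableOn hu.lt_integral
  obtain ⟨hRv, hv_tail⟩ := Rdelta_spec hjδ hv.fst_eq_zero hv.integrableOn hv.lt_integral
  rw [cutPaste_snd, cutPaste_snd]
  set Ru := Rdelta j δ u
  set Rv := Rdelta j δ v
  have hdiff : IntegrableOn (fun r => |u.2 r - v.2 r|) (Ioi 0) :=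
    (hu.integrableOn.sub hv.integrableOn).abs
  have hcut_diff : IntegrableOn
      (fun r => |(Icc 0 Ru).indicator u.2 r - (Icc 0 Rv).indicator v.2 r|) (Ioi 0) :=
    ((hu.integrableOn.indicator measurableSet_Icc).sub
      (hv.integrableOn.indicator measurableSet_Icc)).abs
  have hnear : ∫ r in Ioc 0 Ru, |(Icc 0 Ru).indicator u.2 r - (Icc 0 Rv).indicator v.2 r|
      = ∫ r in Ioc 0 Ru, |u.2 r - v.2 r| := by
    refine setIntegral_congr_fun measurableSet_Ioc fun r hr => ?_
    rw [indicator_of_mem (mem_Icc.2 ⟨hr.1.le, hr.2⟩),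
      indicator_of_mem (mem_Icc.2 ⟨hr.1.le, hr.2.trans hR⟩)]
  have hfar : ∫ r in Ioi Ru, |(Icc 0 Ru).indicator u.2 r - (Icc 0 Rv).indicator v.2 r|
      = ∫ r in Ioc Ru Rv, v.2 r := by
    rw [← Ioi_inter_Icc_of_le hRu, ← setIntegral_indicator measurableSet_Icc]
    refine setIntegral_congr_fun measurableSet_Ioi fun r hr => ?_
    rw [indicator_of_notMem fun h => not_le.2 hr h.2, zero_sub, abs_neg,
      abs_of_nonneg (indicator_nonneg (fun x _ => hv.snd_nonneg x) r)]
  have hfar_le : ∫ r in Ioc Ru Rv, v.2 r ≤ ∫ r in Ioi Ru, |u.2 r - v.2 r| := by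
    have hvRu := hv.integrableOn.mono_set (Ioi_subset_Ioi hRu)
    have huRu := hu.integrableOn.mono_set (Ioi_subset_Ioi hRu)
    rw [integral_Ioc_eq_sub hvRu hR, hv_tail, ← hu_tail, ← integral_sub hvRu huRu]
    exact integral_mono (hvRu.sub huRu) (hdiff.mono_set (Ioi_subset_Ioi hRu))
      fun r => (le_abs_self _).trans_eq (abs_sub_comm _ _)
  have hsplit : ∀ g : ℝ → ℝ, IntegrableOn g (Ioi 0) →
      ∫ r in Ioi (0:ℝ), g r = (∫ r in Ioc 0 Ru, g r) + ∫ r in Ioi Ru, g r := fun g hg => by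
    rw [integral_Ioc_eq_sub hg hRu]
    ring
  rw [hsplit _ hcut_diff, hsplit _ hdiff, hnear, hfar]
  linarith

lemma dist1_cutPaste_le (hjδ : 0 < j * δ) {u v : UEl} (hu : IsCuttable j δ u)
    (hv : IsCuttable j δ v) : dist1 (cutPaste j δ u) (cutPaste j δ v) ≤ dist1 u v := by
  wlog hR : Rdelta j δ u ≤ Rdelta j δ v generalizing u v
  · rw [dist1_comm, dist1_comm u]
    exact this hv hu (le_of_not_ge hR)
  rw [dist1, cutPaste_fst, cutPaste_fst, sub_self, abs_zero, zero_add]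
  exact (integral_abs_cutPaste_sub_le_of_Rdelta_le hjδ hu hv hR).trans
    (le_add_of_nonneg_left (abs_nonneg _))

lemma isCuttable_heat {t : ℝ} (ht : 0 < t) {u : UEl} (hu : IsFinMeas u)
    (hm : j * δ < mass u) : IsCuttable j δ (heat t u) where
  toIsFinMeas := isFinMeas_heat ht hu
  fst_eq_zero := rfl
  lt_integral := by rwa [integral_heat_snd ht hu.integrableOn]

end Cut

section Barriers

variable {j δ : ℝ} {u : UEl}

lemma Sminus_isFinMeas_and_mass (hjδ : 0 < j * δ) (hδ : 0 < δ) (hu : IsFinMeas u)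
    (hm : j * δ < mass u) (k : ℕ) :
    IsFinMeas (Sminus j δ u k) ∧ mass (Sminus j δ u k) = mass u := by
  induction k with
  | zero => exact ⟨hu, rfl⟩
  | succ k ih =>
    have hcut := isCuttable_heat hδ ih.1 (ih.2 ▸ hm)
    refine ⟨isFinMeas_cutPaste hjδ.le hcut.toIsFinMeas, ?_⟩
    rw [Sminus, mass_cutPaste hjδ hcut.fst_eq_zero hcut.integrableOn hcut.lt_integral,
      mass_heat hδ ih.1.integrableOn, ih.2]

lemma Splus_isCuttable_and_mass (hjδ : 0 < j * δ) (hδ : 0 < δ) (hu : IsCuttable j δ u)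
    (k : ℕ) : IsCuttable j δ (Splus j δ u k) ∧ mass (Splus j δ u k) = mass u := by
  induction k with
  | zero => exact ⟨hu, rfl⟩
  | succ k ih =>
    have hmass : mass (cutPaste j δ (Splus j δ u k)) = mass u := by
      rw [mass_cutPaste hjδ ih.1.fst_eq_zero ih.1.integrableOn ih.1.lt_integral, ih.2]
    refine ⟨isCuttable_heat hδ (isFinMeas_cutPaste hjδ.le ih.1.toIsFinMeas)
      (hmass ▸ hu.lt_mass), ?_⟩
    rw [Splus, mass_heat hδ (ih.1.integrableOn.indicator measurableSet_Icc), hmass]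

lemma dist1_Sminus_cutPaste_Splus_le (hjδ : 0 < j * δ) (hδ : 0 < δ) (hu : IsCuttable j δ u)
    (k : ℕ) : dist1 (Sminus j δ u k) (cutPaste j δ (Splus j δ u k)) ≤ 2 * (j * δ) := by
  induction k with
  | zero => exact (dist1_cutPaste_self hjδ hu).le
  | succ k ih =>
    obtain ⟨hA, hAm⟩ := Sminus_isFinMeas_and_mass hjδ hδ hu.toIsFinMeas hu.lt_mass k
    obtain ⟨hB, hBm⟩ := Splus_isCuttable_and_mass hjδ hδ hu k
    have hKB := isFinMeas_cutPaste hjδ.le hB.toIsFinMeas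
    have hKBm : mass (cutPaste j δ (Splus j δ u k)) = mass u := by
      rw [mass_cutPaste hjδ hB.fst_eq_zero hB.integrableOn hB.lt_integral, hBm]
    calc dist1 (Sminus j δ u (k + 1)) (cutPaste j δ (Splus j δ u (k + 1)))
        ≤ dist1 (heat δ (Sminus j δ u k)) (heat δ (cutPaste j δ (Splus j δ u k))) :=
          dist1_cutPaste_le hjδ (isCuttable_heat hδ hA (hAm ▸ hu.lt_mass))
            (isCuttable_heat hδ hKB (hKBm ▸ hu.lt_mass))
      _ ≤ dist1 (Sminus j δ u k) (cutPaste j δ (Splus j δ u k)) :=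
          dist1_heat_le hδ hA.integrableOn hKB.integrableOn
      _ ≤ 2 * (j * δ) := ih

end Barriers

/-- the upper and lower barriers are within `4jδ` of each other in
total variation. -/
theorem barriers_close (j δ : ℝ) (hj : 0 < j) (hδ : 0 < δ)
    (u : ℝ → ℝ) (hu : goodFn u)
    (hju : j * δ < ∫ x in Set.Ioi (0:ℝ), u x) :
    ∀ k : ℕ,
      dist1 (Splus j δ ((0:ℝ), u) k) (Sminus j δ ((0:ℝ), u) k) ≤ 4 * j * δ := by
  have hjδ := mul_pos hj hδ
  have hu₀ : IsCuttable j δ ((0:ℝ), u) := ⟨⟨le_rfl, hu.1, hu.2.1⟩, rfl, hju⟩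
  rintro (_ | k)
  · simp only [Splus, Sminus, dist1, sub_self, abs_zero, integral_zero, add_zero]
    positivity
  · set A := Sminus j δ ((0:ℝ), u) k
    set B := Splus j δ ((0:ℝ), u) k
    obtain ⟨hA, hAm⟩ := Sminus_isFinMeas_and_mass hjδ hδ hu₀.toIsFinMeas hu₀.lt_mass k
    have hKB :=
      isFinMeas_cutPaste hjδ.le (Splus_isCuttable_and_mass hjδ hδ hu₀ k).1.toIsFinMeas
    have hHA := isCuttable_heat hδ hA (hAm ▸ hu₀.lt_mass)
    -- `S⁺_{k+1} = H (K B)` and `S⁻_{k+1} = K (H A)` are both compared with `H A`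
    calc dist1 (heat δ (cutPaste j δ B)) (cutPaste j δ (heat δ A))
        ≤ dist1 (heat δ (cutPaste j δ B)) (heat δ A)
            + dist1 (heat δ A) (cutPaste j δ (heat δ A)) :=
          dist1_triangle (isFinMeas_heat hδ hKB).integrableOn hHA.integrableOn
            (isFinMeas_cutPaste hjδ.le hHA.toIsFinMeas).integrableOn
      _ ≤ dist1 A (cutPaste j δ B) + 2 * (j * δ) := by
          rw [dist1_comm, dist1_cutPaste_self hjδ hHA]
          exact add_le_add_left (dist1_heat_le hδ hA.integrableOn hKB.integrableOn) _
      _ ≤ 4 * j * δ := by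
          linarith [dist1_Sminus_cutPaste_Splus_le hjδ hδ hu₀ k]
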